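/- The graph consisting of two vertex-disjoint triangles connected by a single edge (6 vertices: triangles v_1v_2v_3 and v_4v_5v_6 together with the edge v_3v_4) is not 0-1 strongly EFX-orientable, and hence not strongly EFX-orientable. -/

import Mathlib

open SimpleGraph
open scoped Classical

variable {V : Type*}

def bundleSet (G : SimpleGraph V) (head : Sym2 V → V) (v : V) : Set (Sym2 V) :=
  {e ∈ G.edgeSet | head e = v}

def IsEFXOrientation (G : SimpleGraph V) (f : V → Set (Sym2 V) → NNReal)
    (head : Sym2 V → V) : Prop :=
  (∀ e ∈ G.edgeSet, head e ∈ e) ∧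
  ∀ a b : V, ∀ g ∈ bundleSet G head b,
    f a (bundleSet G head b \ {g}) ≤ f a (bundleSet G head a)

def StronglyEFXOrientable [Fintype V] (G : SimpleGraph V) : Prop :=
  ∀ f : V → Set (Sym2 V) → NNReal,
    (∀ a, Monotone (f a)) →
    (∀ a X, f a X = f a (X ∩ G.incidenceSet a)) →
    ∃ head : Sym2 V → V, IsEFXOrientation G f head

noncomputable def bundle [Fintype V] (G : SimpleGraph V) (head : Sym2 V → V) (v : V) :
    Finset (Sym2 V) :=
  Finset.univ.filter fun e => e ∈ G.edgeSet ∧ head e = v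

def IsEFX01Orientation [Fintype V] (G : SimpleGraph V) (w : V → Sym2 V → ℕ)
    (head : Sym2 V → V) : Prop :=
  (∀ e ∈ G.edgeSet, head e ∈ e) ∧
  ∀ a b : V, ∀ g ∈ bundle G head b,
    ∑ e ∈ (bundle G head b).erase g, w a e ≤ ∑ e ∈ bundle G head a, w a e

def ZeroOneStronglyEFXOrientable [Fintype V] (G : SimpleGraph V) : Prop :=
  ∀ w : V → Sym2 V → ℕ, (∀ a e, w a e ≤ 1) → (∀ a e, a ∉ e → w a e = 0) →
    ∃ head : Sym2 V → V, IsEFX01Orientation G w head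

def IndepOn (G : SimpleGraph V) (s : Set V) : Prop :=
  ∀ a ∈ s, ∀ b ∈ s, ¬ G.Adj a b

/-- Two vertex-disjoint triangles `v₀v₁v₂` and `v₃v₄v₅` connected by the single edge `v₂v₃`. -/
def twoTrianglesEdge : SimpleGraph (Fin 6) :=
  SimpleGraph.fromEdgeSet
    {s(0, 1), s(0, 2), s(1, 2), s(3, 4), s(3, 5), s(4, 5), s(2, 3)}

/-!
Let each triangle edge at an endpoint of the bridge be worth 1 to both of its endpoints, and
every other edge worth 0. The bridge is oriented towards one of its endpoints, say `c` in the
triangle `abc`. If `c` also held `ac`, then `a`, who values only `ac`, would still envy `c`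
after the bridge is removed from `c`'s bundle; so `ac` goes to `a`, and likewise `bc` to `b`.
Now `c` has value 0, and whichever of `a`, `b` receives the worthless edge `ab` holds it next
to a good that `c` values, so `c` envies that agent even after `ab` is removed.
-/

section Orientation

variable [Fintype V] {G : SimpleGraph V} {w : V → Sym2 V → ℕ} {head : Sym2 V → V}

theorem mem_bundle {v : V} {e : Sym2 V} :
    e ∈ bundle G head v ↔ e ∈ G.edgeSet ∧ head e = v := by
  simp [bundle]

theorem bundleSet_eq_coe_bundle (v : V) : bundleSet G head v = bundle G head v := by
  ext e
  simp [bundleSet, bundle]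

theorem bundle_subset_edgeFinset (v : V) : bundle G head v ⊆ G.edgeFinset := fun _ he =>
  G.mem_edgeFinset.2 (mem_bundle.1 he).1

namespace IsEFX01Orientation

theorem le_sum_bundle (h : IsEFX01Orientation G w head) (a : V) {b : V} {g g' : Sym2 V}
    (hg : g ∈ bundle G head b) (hg' : g' ∈ bundle G head b) (hne : g' ≠ g) :
    w a g' ≤ ∑ e ∈ bundle G head a, w a e :=
  calc w a g' ≤ ∑ e ∈ (bundle G head b).erase g, w a e :=
        Finset.single_le_sum (fun _ _ => Nat.zero_le _) (Finset.mem_erase.2 ⟨hne, hg'⟩)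
    _ ≤ _ := h.2 a b g hg

theorem head_eq_of_sole_value (h : IsEFX01Orientation G w head) {a c : V} (hac : G.Adj a c)
    {z : Sym2 V} (hz : z ∈ bundle G head c) (hza : z ≠ s(a, c))
    (hwa : ∀ e ≠ s(a, c), w a e = 0) (hpos : w a s(a, c) ≠ 0) :
    head s(a, c) = a := by
  rcases Sym2.mem_iff.1 (h.1 _ hac) with ha | hc
  · exact ha
  · have hzero : ∑ e ∈ bundle G head a, w a e = 0 := by
      refine Finset.sum_eq_zero fun e he => hwa e ?_
      rintro rfl
      exact hac.ne ((mem_bundle.1 he).2.symm.trans hc)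
    have hle := h.le_sum_bundle a hz (mem_bundle.2 ⟨hac, hc⟩) hza.symm
    omega

theorem head_ne_of_triangle (h : IsEFX01Orientation G w head) {a b c : V} (hab : G.Adj a b)
    (hac : G.Adj a c) (hbc : G.Adj b c) (ha : head s(a, c) = a) (hb : head s(b, c) = b)
    (hwc : ∀ e, e ≠ s(a, c) → e ≠ s(b, c) → w c e = 0) (hpos : w c s(a, c) ≠ 0) :
    head s(a, b) ≠ a := by
  intro hab_head
  have hzero : ∑ e ∈ bundle G head c, w c e = 0 := by
    refine Finset.sum_eq_zero fun e he => ?_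
    have hc := (mem_bundle.1 he).2
    refine hwc e ?_ ?_ <;> rintro rfl
    · exact hac.ne (ha.symm.trans hc)
    · exact hbc.ne (hb.symm.trans hc)
  have hne : s(a, c) ≠ s(a, b) := fun heq => hbc.ne (Sym2.congr_right.1 heq).symm
  have hle := h.le_sum_bundle c (mem_bundle.2 ⟨hab, hab_head⟩) (mem_bundle.2 ⟨hac, ha⟩) hne
  omega

theorem bundle_subset_of_triangle (h : IsEFX01Orientation G w head) {a b c : V}
    (hab : G.Adj a b) (hac : G.Adj a c) (hbc : G.Adj b c)
    (hwa : ∀ e ≠ s(a, c), w a e = 0) (hwb : ∀ e ≠ s(b, c), w b e = 0)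
    (hwc : ∀ e, e ≠ s(a, c) → e ≠ s(b, c) → w c e = 0)
    (hwac : w a s(a, c) ≠ 0) (hwbc : w b s(b, c) ≠ 0)
    (hwca : w c s(a, c) ≠ 0) (hwcb : w c s(b, c) ≠ 0) :
    bundle G head c ⊆ {s(a, c), s(b, c)} := by
  intro z hz
  by_contra hzab
  simp only [Finset.mem_insert, Finset.mem_singleton, not_or] at hzab
  have ha := h.head_eq_of_sole_value hac hz hzab.1 hwa hwac
  have hb := h.head_eq_of_sole_value hbc hz hzab.2 hwb hwbc
  rcases Sym2.mem_iff.1 (h.1 _ hab) with hab_head | hab_head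
  · exact h.head_ne_of_triangle hab hac hbc ha hb hwc hwca hab_head
  · rw [Sym2.eq_swap] at hab_head
    exact h.head_ne_of_triangle hab.symm hbc hac hb ha (fun e he₁ he₂ => hwc e he₂ he₁) hwcb
      hab_head

end IsEFX01Orientation


noncomputable def sumValuation (G : SimpleGraph V) (w : V → Sym2 V → ℕ) (a : V)
    (X : Set (Sym2 V)) : NNReal :=
  ∑ e ∈ G.edgeFinset, X.indicator (fun e => (w a e : NNReal)) e

theorem sumValuation_mono (a : V) : Monotone (sumValuation G w a) := fun _ _ hXY =>
  Finset.sum_le_sum fun _ _ => Set.indicator_le_indicator_of_subset hXY (fun _ => zero_le) _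

theorem sumValuation_inter_incidenceSet (hw : ∀ a e, a ∉ e → w a e = 0) (a : V)
    (X : Set (Sym2 V)) :
    sumValuation G w a X = sumValuation G w a (X ∩ G.incidenceSet a) := by
  refine Finset.sum_congr rfl fun e he => ?_
  by_cases hae : a ∈ e
  · have hinc : e ∈ G.incidenceSet a := ⟨G.mem_edgeFinset.1 he, hae⟩
    by_cases hX : e ∈ X <;> simp [Set.indicator, hX, hinc]
  · simp [Set.indicator, hw a e hae]

theorem sumValuation_coe {s : Finset (Sym2 V)} (hs : s ⊆ G.edgeFinset) (a : V) :
    sumValuation G w a s = ((∑ e ∈ s, w a e : ℕ) : NNReal) := by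
  rw [sumValuation, Finset.sum_indicator_subset _ hs, Nat.cast_sum]

theorem IsEFXOrientation.isEFX01Orientation
    (h : IsEFXOrientation G (sumValuation G w) head) : IsEFX01Orientation G w head := by
  refine ⟨h.1, fun a b g hg => ?_⟩
  have hle := h.2 a b g (by rw [bundleSet_eq_coe_bundle]; exact hg)
  rw [bundleSet_eq_coe_bundle, bundleSet_eq_coe_bundle, ← Finset.coe_erase,
    sumValuation_coe ((Finset.erase_subset _ _).trans (bundle_subset_edgeFinset _)),
    sumValuation_coe (bundle_subset_edgeFinset _)] at hle
  exact_mod_cast hle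

theorem StronglyEFXOrientable.zeroOneStronglyEFXOrientable (h : StronglyEFXOrientable G) :
    ZeroOneStronglyEFXOrientable G := fun _ _ hw =>
  let ⟨head, hhead⟩ := h _ sumValuation_mono (sumValuation_inter_incidenceSet hw)
  ⟨head, hhead.isEFX01Orientation⟩

end Orientation

def twoTrianglesValuation (a : Fin 6) (e : Sym2 (Fin 6)) : ℕ :=
  if a ∈ e ∧ e ∈ ({s(0, 2), s(1, 2), s(3, 4), s(3, 5)} : Finset (Sym2 (Fin 6))) then 1 else 0

theorem twoTrianglesEdge_not_isEFX01Orientation (head : Sym2 (Fin 6) → Fin 6) :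
    ¬ IsEFX01Orientation twoTrianglesEdge twoTrianglesValuation head := by
  intro h
  have hbridge : twoTrianglesEdge.Adj 2 3 := by simp [twoTrianglesEdge]
  rcases Sym2.mem_iff.1 (h.1 _ hbridge) with h2 | h3
  · have := h.bundle_subset_of_triangle (a := 0) (b := 1) (c := 2)
      (by simp [twoTrianglesEdge]) (by simp [twoTrianglesEdge]) (by simp [twoTrianglesEdge])
      (by decide) (by decide) (by decide) (by decide) (by decide) (by decide) (by decide)
      (mem_bundle.2 ⟨hbridge, h2⟩)
    simp at this
  · have := h.bundle_subset_of_triangle (a := 5) (b := 4) (c := 3)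
      (by simp [twoTrianglesEdge]) (by simp [twoTrianglesEdge]) (by simp [twoTrianglesEdge])
      (by decide) (by decide) (by decide) (by decide) (by decide) (by decide) (by decide)
      (mem_bundle.2 ⟨hbridge, h3⟩)
    simp at this

/-- Two vertex-disjoint triangles connected by a single edge form a graph
that is not 0-1 strongly EFX-orientable, and hence not strongly EFX-orientable. -/
theorem twoTrianglesEdge_not_stronglyEFXOrientable :
    ¬ ZeroOneStronglyEFXOrientable twoTrianglesEdge ∧
    ¬ StronglyEFXOrientable twoTrianglesEdge := by
  have h01 : ¬ ZeroOneStronglyEFXOrientable twoTrianglesEdge := fun h =>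
    let ⟨head, hhead⟩ := h twoTrianglesValuation (by decide) (by decide)
    twoTrianglesEdge_not_isEFX01Orientation head hhead
  exact ⟨h01, fun h => h01 h.zeroOneStronglyEFXOrientable⟩
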